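/- Suppose G and G' are groups whose commutator subgroups are free groups of the same finite rank g, and G/[G,G] ≅ G'/[G',G'] ≅ ℤ. If φ : G → G' is a surjective homomorphism, then φ is an isomorphism. -/

import Mathlib

/-!
A finitely generated residually finite group `K` is Hopfian: if `f w = 1` for a surjective
`f : K →* K` and some `w ≠ 1`, choose a finite quotient `π : K →* Q` with `π w ≠ 1`. Composition
with `f` is injective, hence bijective, on the finite set of homomorphisms `K →* Q`, so
`π = ψ ∘ f` for some `ψ`, and `π w = ψ (f w) = 1`. Free groups are residually finite, because a
reduced word of length `n` can be realised by permutations of `{0, …, n}` carrying `n` to `0`,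
and `ℤ` is free of rank one.

The surjection `φ` induces a surjection `ℤ → ℤ` on abelianizations, which is therefore injective,
so `ker φ ≤ [G, G]`; and `φ` maps `[G, G]` onto `[G', G']`, a surjection between free groups of
rank `g`, which is therefore injective as well.
-/

open Function

theorem Equiv.Perm.exists_apply_eq_of_injOn {ι X : Type*} [Finite X] {s t : ι → X} {S : Set ι}
    (hs : S.InjOn s) (ht : S.InjOn t) : ∃ σ : Equiv.Perm X, ∀ i ∈ S, σ (s i) = t i := by
  classical
  have := Fintype.ofFinite X
  let e : s '' S ≃ t '' S :=
    (Equiv.Set.imageOfInjOn s S hs).symm.trans (Equiv.Set.imageOfInjOn t S ht)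
  refine ⟨e.extendSubtype, fun i hi => ?_⟩
  have hpre : (Equiv.Set.imageOfInjOn s S hs).symm ⟨s i, i, hi, rfl⟩ = ⟨i, hi⟩ :=
    (Equiv.symm_apply_eq _).mpr rfl
  rw [Equiv.extendSubtype_apply_of_mem e _ ⟨i, hi, rfl⟩]
  simp only [e, Equiv.trans_apply, hpre]
  rfl

theorem List.prod_apply_eq_of_forall_getElem {X : Type*} (l : List (Equiv.Perm X)) (p : ℕ → X)
    (h : ∀ j (hj : j < l.length), l[j] (p (j + 1)) = p j) : l.prod (p l.length) = p 0 := by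
  induction l generalizing p with
  | nil => rfl
  | cons σ l ih =>
    rw [List.prod_cons, Equiv.Perm.mul_apply, List.length_cons,
      ih (fun j => p (j + 1)) fun j hj => h (j + 1) (by simpa using hj)]
    exact h 0 (by simp)

namespace FreeGroup

theorem IsReduced.snd_eq_of_fst_eq {α : Type*} {L : List (α × Bool)} (hL : IsReduced L)
    {i j : ℕ} (hi : i < L.length) (hj : j < L.length) (hij : i + 1 = j) (h : L[i].1 = L[j].1) :
    L[i].2 = L[j].2 := by
  subst hij
  exact List.IsChain.getElem hL i hj h

/-- Read from the right, letter `j` of `L` moves the point `j + 1` to `j`. For each generator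
these moves form a partial bijection, since `L` has no cancelling pair of adjacent letters. -/
theorem IsReduced.exists_lift_mk_apply_last {α : Type*} {L : List (α × Bool)} (hL : IsReduced L) :
    ∃ σ : α → Equiv.Perm (Fin (L.length + 1)), lift σ (mk L) (Fin.last _) = 0 := by
  set n := L.length
  let src : Fin n → Fin (n + 1) := fun j => if L[j].2 then j.succ else j.castSucc
  let tgt : Fin n → Fin (n + 1) := fun j => if L[j].2 then j.castSucc else j.succ
  have hσ : ∀ a, ∃ σ : Equiv.Perm (Fin (n + 1)),
      ∀ j ∈ {j : Fin n | L[j].1 = a}, σ (src j) = tgt j := by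
    intro a
    refine Equiv.Perm.exists_apply_eq_of_injOn ?_ ?_ <;>
    · intro i hi j hj h
      have hij := hL.snd_eq_of_fst_eq i.2 j.2
      have hji := hL.snd_eq_of_fst_eq j.2 i.2
      simp only [src, tgt, Set.mem_ofPred_eq, Fin.ext_iff] at hi hj h ⊢
      split_ifs at h <;> grind
  choose σ hσ' using hσ
  refine ⟨σ, ?_⟩
  rw [lift_mk]
  have hprod := List.prod_apply_eq_of_forall_getElem (L.map fun x => cond x.2 (σ x.1) (σ x.1)⁻¹)
    (fun k => Fin.ofNat (n + 1) k) ?_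
  · simpa [n] using hprod
  intro j hj
  rw [List.length_map] at hj
  have hj' := hσ' L[j].1 ⟨j, hj⟩ rfl
  simp only [src, tgt] at hj'
  simp only [List.getElem_map]
  have hsucc : Fin.ofNat (n + 1) (j + 1) = (⟨j, hj⟩ : Fin n).succ :=
    Fin.ext (Nat.mod_eq_of_lt (by omega))
  have hcast : Fin.ofNat (n + 1) j = (⟨j, hj⟩ : Fin n).castSucc :=
    Fin.ext (Nat.mod_eq_of_lt (by omega))
  rw [hsucc, hcast]
  simp only [Fin.getElem_fin] at hj'
  cases hb : L[j].2
  · simp only [hb, Bool.false_eq_true, if_false, cond_false] at hj' ⊢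
    rw [Equiv.Perm.inv_eq_iff_eq, hj']
  · simpa only [hb, if_true, cond_true] using hj'

instance instResiduallyFinite {α : Type*} : Group.ResiduallyFinite (FreeGroup α) := by
  classical
  refine Group.residuallyFinite_of_forall_exists_finite_monoidHom.{_, 0} fun w hw => ?_
  obtain ⟨σ, hσ⟩ := (isReduced_toWord (x := w)).exists_lift_mk_apply_last
  have hlen : w.toWord.length ≠ 0 := by simpa using hw
  refine ⟨_, inferInstance, inferInstance, lift σ, fun h => ?_⟩
  rw [mk_toWord, h] at hσ
  exact hlen (congrArg Fin.val hσ)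

end FreeGroup

theorem Group.FG.finite_monoidHom (G Q : Type*) [Group G] [Group.FG G] [Group Q] [Finite Q] :
    Finite (G →* Q) := by
  obtain ⟨S, hS⟩ := Group.fg_def.mp ‹_›
  exact Finite.of_injective (fun f : G →* Q => fun s : S => f s) fun f₁ f₂ h =>
    MonoidHom.eq_of_eqOn_dense hS fun s hs => congrFun h ⟨s, hs⟩

theorem Group.ResiduallyFinite.injective_of_surjective {G : Type*} [Group G] [Group.FG G]
    [Group.ResiduallyFinite G] {f : G →* G} (hf : Surjective f) : Injective f := by
  refine (injective_iff_map_eq_one f).mpr fun w hw => ?_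
  by_contra hw1
  obtain ⟨H, hH⟩ := Group.exists_finiteIndexNormalSubgroup_notMem w hw1
  have := Group.FG.finite_monoidHom G (G ⧸ H.toSubgroup)
  have hcomp : Injective fun ψ : G →* G ⧸ H.toSubgroup => ψ.comp f :=
    fun _ _ h => (MonoidHom.cancel_right hf).mp h
  obtain ⟨ψ, hψ⟩ := Finite.surjective_of_injective hcomp (QuotientGroup.mk' H.toSubgroup)
  apply hH
  rw [← FiniteIndexNormalSubgroup.mem_toSubgroup_iff, ← QuotientGroup.eq_one_iff,
    ← QuotientGroup.mk'_apply, ← hψ, MonoidHom.comp_apply, hw, map_one]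

theorem MonoidHom.injective_of_surjective_of_mulEquiv {H H' K : Type*} [Group H] [Group H']
    [Group K] [Group.FG K] [Group.ResiduallyFinite K] (e : H ≃* K) (e' : H' ≃* K) {f : H →* H'}
    (hf : Surjective f) : Injective f := by
  have hK := Group.ResiduallyFinite.injective_of_surjective
    (f := (e'.toMonoidHom.comp f).comp e.symm.toMonoidHom)
    (e'.surjective.comp (hf.comp e.symm.surjective))
  intro x y hxy
  simpa using hK (a₁ := e x) (a₂ := e y) (by simp [hxy])

namespace MonoidHom

variable {G G' : Type*} [Group G] [Group G'] {φ : G →* G'}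

theorem map_commutator_of_surjective (hφ : Surjective φ) :
    (commutator G).map φ = commutator G' := by
  rw [map_commutator_eq, range_eq_top.mpr hφ, commutator_def]

theorem abelianizationMap_surjective (hφ : Surjective φ) : Surjective (Abelianization.map φ) := by
  intro y
  obtain ⟨x, rfl⟩ := (QuotientGroup.mk_surjective.comp hφ) y
  exact ⟨Abelianization.of x, rfl⟩

theorem ker_le_commutator (hφ : Injective (Abelianization.map φ)) : φ.ker ≤ commutator G := by
  intro x hx
  have hx' : Abelianization.of x = 1 :=
    hφ (by rw [Abelianization.map_of, mem_ker.mp hx, map_one, map_one])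
  exact (QuotientGroup.eq_one_iff x).mp hx'

theorem injective_of_ker_le {N : Subgroup G} (hker : φ.ker ≤ N)
    (hN : Injective (φ.subgroupMap N)) : Injective φ := by
  refine (injective_iff_map_eq_one φ).mpr fun x hx => ?_
  have : φ.subgroupMap N ⟨x, hker hx⟩ = φ.subgroupMap N 1 := Subtype.ext (by simpa using hx)
  exact congrArg Subtype.val (hN this)

theorem injective_of_surjective_of_mulEquiv_commutator_abelianization {K A : Type*} [Group K]
    [Group.FG K] [Group.ResiduallyFinite K] [Group A] [Group.FG A] [Group.ResiduallyFinite A]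
    (e : commutator G ≃* K) (e' : commutator G' ≃* K) (a : Abelianization G ≃* A)
    (a' : Abelianization G' ≃* A) (hφ : Surjective φ) : Injective φ := by
  have hab := injective_of_surjective_of_mulEquiv a a' (abelianizationMap_surjective hφ)
  have hcomm := injective_of_surjective_of_mulEquiv e
    ((MulEquiv.subgroupCongr (map_commutator_of_surjective hφ)).trans e')
    (φ.subgroupMap_surjective (commutator G))
  exact injective_of_ker_le (ker_le_commutator hab) hcomm

end MonoidHom

theorem stmt_15 {G G' : Type*} [Group G] [Group G'] (g : ℕ)
    (e : commutator G ≃* FreeGroup (Fin g))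
    (e' : commutator G' ≃* FreeGroup (Fin g))
    (a : Abelianization G ≃* Multiplicative ℤ)
    (a' : Abelianization G' ≃* Multiplicative ℤ)
    (φ : G →* G') (hφ : Function.Surjective φ) :
    Function.Bijective φ :=
  ⟨φ.injective_of_surjective_of_mulEquiv_commutator_abelianization e e'
    (a.trans (FreeGroup.mulEquivIntOfUnique (α := Unit)).symm)
    (a'.trans (FreeGroup.mulEquivIntOfUnique (α := Unit)).symm) hφ, hφ⟩
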